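/- arXiv:1305.1681 — 3 statements merged into one kernel-verified Lean document; each statement's English description precedes it below -/
import Mathlib

section
/- Let G=(V,w) be a weighted graph that is a γ-stable instance of Max Cut (γ ≥ 1) with maximum cut (S,S̄). Then for every subset A of V with ∅ ≠ A ≠ V: w(E(S,S̄) ∩ E(A,Ā)) > γ·w(E(A,Ā) ∖ E(S,S̄)). (That is, every nontrivial cut (A,Ā) cuts strictly more than γ times as much weight of maximum-cut edges as of non-maximum-cut edges.) -/
/-!
Flipping the side of every vertex of `A` turns the maximum cut `(S, S̄)` into the cut
`(S ∆ A, (S ∆ A)ᶜ)`, which separates a pair exactly when precisely one of `S`, `A`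
separates it. So the edges lost are those of `E(S,S̄) ∩ E(A,Ā)` and the edges gained are
those of `E(A,Ā) ∖ E(S,S̄)`, and stability applied to `S ∆ A` is the claim.
-/

open Finset

/-- The pair `{u, v}` is separated by the cut `(S, V∖S)`. -/
abbrev cutSep {V : Type*} (S : Finset V) (u v : V) : Prop :=
  (u ∈ S ∧ v ∉ S) ∨ (v ∈ S ∧ u ∉ S)

/-- Total weight of the set of unordered pairs `{u,v}` satisfying the symmetric
predicate `P`; the sum over ordered pairs counts each unordered pair twice, whence
the division by `2`. -/
noncomputable def cutWeight {V : Type*} [Fintype V] (w : V → V → ℝ)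
    (P : V → V → Prop) : ℝ :=
  have := Classical.propDecidable
  (∑ u, ∑ v, if P u v then w u v else 0) / 2

/-- `G = (V, w)` is a `γ`-stable instance of Max Cut with maximum cut `(S, V∖S)`:
for every cut `(T, V∖T)` different from `(S, V∖S)`,
`w(E(S,S̄)∖E(T,T̄)) > γ·w(E(T,T̄)∖E(S,S̄))`. -/
def IsMaxCutStable {V : Type*} [Fintype V] [DecidableEq V]
    (w : V → V → ℝ) (γ : ℝ) (S : Finset V) : Prop :=
  ∀ T : Finset V, T ≠ S → T ≠ Sᶜ →
    γ * cutWeight w (fun u v => cutSep T u v ∧ ¬ cutSep S u v) <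
      cutWeight w (fun u v => cutSep S u v ∧ ¬ cutSep T u v)

lemma cutWeight_congr {V : Type*} [Fintype V] (w : V → V → ℝ) {P Q : V → V → Prop}
    (h : ∀ u v, P u v ↔ Q u v) : cutWeight w P = cutWeight w Q :=
  congrArg (cutWeight w) (funext₂ fun u v => propext (h u v))

section symmDiff

variable {V : Type*} [DecidableEq V]

lemma cutSep_symmDiff_iff (S A : Finset V) (u v : V) :
    cutSep (symmDiff S A) u v ↔ ¬(cutSep S u v ↔ cutSep A u v) := by
  simp only [cutSep, mem_symmDiff]
  tauto

variable [Fintype V] (w : V → V → ℝ) (S A : Finset V)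

lemma cutWeight_symmDiff_gained :
    cutWeight w (fun u v => cutSep (symmDiff S A) u v ∧ ¬ cutSep S u v) =
      cutWeight w (fun u v => cutSep A u v ∧ ¬ cutSep S u v) :=
  cutWeight_congr w fun u v => by rw [cutSep_symmDiff_iff]; tauto

lemma cutWeight_symmDiff_lost :
    cutWeight w (fun u v => cutSep S u v ∧ ¬ cutSep (symmDiff S A) u v) =
      cutWeight w (fun u v => cutSep S u v ∧ cutSep A u v) :=
  cutWeight_congr w fun u v => by rw [cutSep_symmDiff_iff]; tauto

end symmDiff

theorem stmt1_general {V : Type*} [Fintype V] [DecidableEq V]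
    (w : V → V → ℝ)
    (γ : ℝ) (S : Finset V)
    (hstable : IsMaxCutStable w γ S) :
    ∀ A : Finset V, A ≠ ∅ → A ≠ Finset.univ →
      γ * cutWeight w (fun u v => cutSep A u v ∧ ¬ cutSep S u v) <
        cutWeight w (fun u v => cutSep S u v ∧ cutSep A u v) := by
  intro A hA_ne_empty hA_ne_univ
  have hS : symmDiff S A ≠ S := by
    rwa [Ne, symmDiff_eq_left]
  have hSc : symmDiff S A ≠ Sᶜ := by
    rwa [Ne, ← hnot_eq_compl, ← symmDiff_top, top_eq_univ, symmDiff_right_inj]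
  have key := hstable (symmDiff S A) hS hSc
  rwa [cutWeight_symmDiff_gained, cutWeight_symmDiff_lost] at key

/-- If `G = (V, w)` is a `γ`-stable instance of Max Cut (`γ ≥ 1`)
with maximum cut `(S, S̄)`, then for every subset `A` of `V` with `∅ ≠ A ≠ V`:
`w(E(S,S̄) ∩ E(A,Ā)) > γ·w(E(A,Ā) ∖ E(S,S̄))`. -/
theorem stmt1 {V : Type*} [Fintype V] [DecidableEq V]
    (w : V → V → ℝ) (hsymm : ∀ u v, w u v = w v u) (hnonneg : ∀ u v, 0 ≤ w u v)
    (γ : ℝ) (hγ : 1 ≤ γ) (S : Finset V)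
    (hstable : IsMaxCutStable w γ S) :
    ∀ A : Finset V, A ≠ ∅ → A ≠ Finset.univ →
      γ * cutWeight w (fun u v => cutSep A u v ∧ ¬ cutSep S u v) <
        cutWeight w (fun u v => cutSep S u v ∧ cutSep A u v) :=
  stmt1_general w γ S hstable
end

section
/- Consider the reduction from Sparsest Cut to Max Cut on a finite set V₀ with n = |V₀| ≥ 2, producing the weighted graph G on V = V₀×{1,2} with S = V₀×{1}. For any A ⊆ V₀, let T = {u₁ : u ∈ A} ∪ {u₂ : u ∉ A}. Then w(E(S,S̄)) − w(E(T,T̄)) = 2·cap(E_c(A,Ā)) − 2·dem(E_d(A,Ā)). In particular, if dem(E_d(A,Ā)) > cap(E_c(A,Ā)) for some A ⊆ V₀, then (S,S̄) is not a maximum cut of G. -/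
open Finset

/-- The reduction from Sparsest Cut to Max Cut: the graph on `V₀ × {1,2}` (here
`V₀ × Bool`, side "1" being `false`) with `w(u₁,v₂) = w(u₂,v₁) = cap(u,v)`,
`w(u₁,v₁) = w(u₂,v₂) = dem(u,v)` for `u ≠ v`, and `w(u₁,u₂) = W∞`. -/
noncomputable def reductionWeight {V₀ : Type*} [DecidableEq V₀]
    (cap dem : V₀ → V₀ → ℝ) (Winf : ℝ) :
    V₀ × Bool → V₀ × Bool → ℝ :=
  fun p q =>
    if p.1 = q.1 then (if p.2 = q.2 then 0 else Winf)
    else (if p.2 = q.2 then dem p.1 q.1 else cap p.1 q.1)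

/-!
The cut `T` is the image of `S = V₀ × {1}` under the relabelling `flipOutside A`, which exchanges
the two copies of every point outside `A`. Pulling the weights back along this relabelling gives
again a reduction graph, now with `cap` and `dem` exchanged on the pairs separated by `A`. In any
reduction graph the cut `S` has weight `∑_{u ≠ v} cap(u,v) + n·W∞` (over ordered pairs), so the two
cut weights differ by `∑ (cap − dem)` over the ordered pairs separated by `A`.
-/
theorem cutWeight_eq_sum {V : Type*} [Fintype V] (w : V → V → ℝ) (P : V → V → Prop)
    [∀ u v, Decidable (P u v)] :
    cutWeight w P = (∑ u, ∑ v, if P u v then w u v else 0) / 2 := by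
  unfold cutWeight
  congr!

theorem cutWeight_comp_equiv {V W : Type*} [Fintype V] [Fintype W] (e : V ≃ W)
    (w : W → W → ℝ) (P : W → W → Prop) :
    cutWeight (fun u v => w (e u) (e v)) (fun u v => P (e u) (e v)) = cutWeight w P := by
  classical
  rw [cutWeight_eq_sum, cutWeight_eq_sum]
  exact congrArg (· / 2) <| Fintype.sum_equiv e _ _ fun u => Fintype.sum_equiv e _ _ fun v => rfl

theorem cutWeight_cutSep_of_equiv {V W : Type*} [Fintype V] [Fintype W] (e : V ≃ W)
    {S : Finset V} {T : Finset W} (hST : ∀ p, e p ∈ T ↔ p ∈ S) (w : W → W → ℝ) :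
    cutWeight w (cutSep T) = cutWeight (fun p q => w (e p) (e q)) (cutSep S) := by
  rw [← cutWeight_comp_equiv e]
  simp only [cutSep, hST]

section Reduction

variable {V₀ : Type*} [DecidableEq V₀]

def flipOutside (A : Finset V₀) : Equiv.Perm (V₀ × Bool) :=
  Equiv.prodShear (Equiv.refl V₀) fun x => if x ∈ A then Equiv.refl Bool else Equiv.boolNot

theorem flipOutside_apply (A : Finset V₀) (p : V₀ × Bool) :
    flipOutside A p = (p.1, if p.1 ∈ A then p.2 else !p.2) := by
  by_cases hp : p.1 ∈ A <;> simp [flipOutside, hp]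

theorem reductionWeight_flipOutside (cap dem : V₀ → V₀ → ℝ) (Winf : ℝ) (A : Finset V₀)
    (p q : V₀ × Bool) :
    reductionWeight cap dem Winf (flipOutside A p) (flipOutside A q) =
      reductionWeight (fun u v => if cutSep A u v then dem u v else cap u v)
        (fun u v => if cutSep A u v then cap u v else dem u v) Winf p q := by
  obtain ⟨u, b⟩ := p
  obtain ⟨v, c⟩ := q
  simp only [flipOutside_apply, reductionWeight]
  by_cases huv : u = v
  · subst huv
    by_cases hu : u ∈ A <;> cases b <;> cases c <;> simp [hu]
  · by_cases hu : u ∈ A <;> by_cases hv : v ∈ A <;> cases b <;> cases c <;> simp [hu, hv, huv]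

theorem cutWeight_reductionWeight_sides [Fintype V₀] (cap dem : V₀ → V₀ → ℝ) (Winf : ℝ) :
    cutWeight (reductionWeight cap dem Winf)
        (cutSep (univ.filter fun p : V₀ × Bool => p.2 = false)) =
      ∑ u, ∑ v, if u = v then Winf else cap u v := by
  rw [cutWeight_eq_sum]
  simp only [Fintype.sum_prod_type, Fintype.sum_bool, ← sum_add_distrib, sum_div]
  refine sum_congr rfl fun u _ => sum_congr rfl fun v _ => ?_
  by_cases huv : u = v <;> simp [cutSep, reductionWeight, huv]

theorem cutWeight_reductionWeight_sub_flip [Fintype V₀] (cap dem : V₀ → V₀ → ℝ) (Winf : ℝ)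
    (A : Finset V₀) :
    cutWeight (reductionWeight cap dem Winf)
        (cutSep (univ.filter fun p : V₀ × Bool => p.2 = false)) -
      cutWeight (reductionWeight cap dem Winf)
        (cutSep (univ.filter fun p : V₀ × Bool =>
          (p.1 ∈ A ∧ p.2 = false) ∨ (p.1 ∉ A ∧ p.2 = true))) =
    2 * cutWeight cap (cutSep A) - 2 * cutWeight dem (cutSep A) := by
  have hT : ∀ p, flipOutside A p ∈ univ.filter (fun p : V₀ × Bool =>
      (p.1 ∈ A ∧ p.2 = false) ∨ (p.1 ∉ A ∧ p.2 = true)) ↔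
      p ∈ univ.filter fun p : V₀ × Bool => p.2 = false := by
    intro p
    by_cases hp : p.1 ∈ A <;> simp [flipOutside_apply, hp]
  rw [cutWeight_cutSep_of_equiv (flipOutside A) hT]
  simp only [reductionWeight_flipOutside]
  rw [cutWeight_reductionWeight_sides, cutWeight_reductionWeight_sides, cutWeight_eq_sum,
    cutWeight_eq_sum, mul_div_cancel₀ _ two_ne_zero, mul_div_cancel₀ _ two_ne_zero,
    ← sum_sub_distrib, ← sum_sub_distrib]
  refine sum_congr rfl fun u _ => ?_
  rw [← sum_sub_distrib, ← sum_sub_distrib]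
  refine sum_congr rfl fun v _ => ?_
  by_cases huv : u = v
  · simp [huv]
  · split_ifs <;> ring

end Reduction

theorem stmt7_general {V₀ : Type*} [Fintype V₀] [DecidableEq V₀]
    (cap dem : V₀ → V₀ → ℝ)
    (Winf : ℝ) :
    (∀ A : Finset V₀,
      cutWeight (reductionWeight cap dem Winf)
          (cutSep (Finset.univ.filter (fun p : V₀ × Bool => p.2 = false))) -
        cutWeight (reductionWeight cap dem Winf)
          (cutSep (Finset.univ.filter (fun p : V₀ × Bool =>
            (p.1 ∈ A ∧ p.2 = false) ∨ (p.1 ∉ A ∧ p.2 = true)))) =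
      2 * cutWeight cap (cutSep A) - 2 * cutWeight dem (cutSep A)) ∧
    ((∃ A : Finset V₀, cutWeight cap (cutSep A) < cutWeight dem (cutSep A)) →
      ∃ T : Finset (V₀ × Bool),
        cutWeight (reductionWeight cap dem Winf)
            (cutSep (Finset.univ.filter (fun p : V₀ × Bool => p.2 = false))) <
          cutWeight (reductionWeight cap dem Winf) (cutSep T)) := by
  refine ⟨cutWeight_reductionWeight_sub_flip cap dem Winf, fun ⟨A, hA⟩ => ?_⟩
  exact ⟨univ.filter fun p => (p.1 ∈ A ∧ p.2 = false) ∨ (p.1 ∉ A ∧ p.2 = true),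
    by linarith [cutWeight_reductionWeight_sub_flip cap dem Winf A]⟩

/-- In the reduction from Sparsest Cut to Max Cut (with `W∞ ≥ 0`),
for every `A ⊆ V₀` and the corresponding cut `T = {u₁ : u ∈ A} ∪ {u₂ : u ∉ A}`:
`w(E(S,S̄)) − w(E(T,T̄)) = 2·cap(E_c(A,Ā)) − 2·dem(E_d(A,Ā))`.  In particular, if
`dem(E_d(A,Ā)) > cap(E_c(A,Ā))` for some `A`, then `(S, S̄)` is not a maximum cut. -/
theorem stmt7 {V₀ : Type*} [Fintype V₀] [DecidableEq V₀]
    (hcard : 2 ≤ Fintype.card V₀)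
    (cap dem : V₀ → V₀ → ℝ)
    (hcaps : ∀ u v, cap u v = cap v u) (hdems : ∀ u v, dem u v = dem v u)
    (hcapn : ∀ u v, 0 ≤ cap u v) (hdemn : ∀ u v, 0 ≤ dem u v)
    (hcap0 : ∀ u, cap u u = 0) (hdem0 : ∀ u, dem u u = 0)
    (Winf : ℝ) (hWinf : 0 ≤ Winf) :
    (∀ A : Finset V₀,
      cutWeight (reductionWeight cap dem Winf)
          (cutSep (Finset.univ.filter (fun p : V₀ × Bool => p.2 = false))) -
        cutWeight (reductionWeight cap dem Winf)
          (cutSep (Finset.univ.filter (fun p : V₀ × Bool =>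
            (p.1 ∈ A ∧ p.2 = false) ∨ (p.1 ∉ A ∧ p.2 = true)))) =
      2 * cutWeight cap (cutSep A) - 2 * cutWeight dem (cutSep A)) ∧
    ((∃ A : Finset V₀, cutWeight cap (cutSep A) < cutWeight dem (cutSep A)) →
      ∃ T : Finset (V₀ × Bool),
        cutWeight (reductionWeight cap dem Winf)
            (cutSep (Finset.univ.filter (fun p : V₀ × Bool => p.2 = false))) <
          cutWeight (reductionWeight cap dem Winf) (cutSep T)) :=
  stmt7_general cap dem Winf
end

section
/- Let (G=(V,w); s₁,…,s_k) be a Minimum Multiway Cut instance, let S* be a minimum multiway cut with cut edge set E*, let γ ≥ 1, and let N be a collection of multiway cuts containing S*. Then the following are equivalent: (A) for every γ-perturbation w' of w (i.e., w(u,v) ≤ w'(u,v) ≤ γ·w(u,v) for all pairs) and every multiway cut S' ∉ N with cut edge set E': w'(E') > w'(E*); (B) for every multiway cut S' ∉ N with cut edge set E': w(E'∖E*) > γ·w(E*∖E'). (This is the equivalence of the two definitions of (γ,N)-weak stability for Minimum Multiway Cut.) -/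
/-!
Splitting both cuts along their common edges gives
`w'(E') - w'(E*) = w'(E' ∖ E*) - w'(E* ∖ E')`. Over all `γ`-perturbations `w'` this is
smallest, namely `w(E' ∖ E*) - γ·w(E* ∖ E')`, for the perturbation that multiplies the
weights of `E* ∖ E'` by `γ` and leaves all others unchanged.
-/

open Finset

/-- `f : V → Fin k` is a multiway cut for terminals `s`: vertex `s i` lies in part `i`. -/
def IsMultiwayCut {V : Type*} {k : ℕ} (s : Fin k → V) (f : V → Fin k) : Prop :=
  ∀ i, f (s i) = i

section CutWeight

variable {V : Type*} [Fintype V]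

lemma cutWeight_eq (w : V → V → ℝ) (P : V → V → Prop) [∀ u v, Decidable (P u v)] :
    cutWeight w P = (∑ u, ∑ v, if P u v then w u v else 0) / 2 := by
  unfold cutWeight
  congr!

lemma cutWeight_mono {w₁ w₂ : V → V → ℝ} {P : V → V → Prop}
    (h : ∀ u v, P u v → w₁ u v ≤ w₂ u v) : cutWeight w₁ P ≤ cutWeight w₂ P := by
  classical
  rw [cutWeight_eq, cutWeight_eq]
  gcongr with u _ v _
  split_ifs with hP
  exacts [h u v hP, le_rfl]

lemma cutWeight_congr_weight {w₁ w₂ : V → V → ℝ} {P : V → V → Prop}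
    (h : ∀ u v, P u v → w₁ u v = w₂ u v) : cutWeight w₁ P = cutWeight w₂ P :=
  (cutWeight_mono fun u v hP => (h u v hP).le).antisymm
    (cutWeight_mono fun u v hP => (h u v hP).ge)

lemma cutWeight_const_mul (c : ℝ) (w : V → V → ℝ) (P : V → V → Prop) :
    cutWeight (fun u v => c * w u v) P = c * cutWeight w P := by
  classical
  simp only [cutWeight_eq, mul_div_assoc', Finset.mul_sum, mul_ite, mul_zero]

lemma cutWeight_and_add_and_not (w : V → V → ℝ) (P Q : V → V → Prop) :
    cutWeight w (fun u v => P u v ∧ Q u v) + cutWeight w (fun u v => P u v ∧ ¬ Q u v) =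
      cutWeight w P := by
  classical
  simp only [cutWeight_eq, ← add_div, ← Finset.sum_add_distrib]
  refine congrArg (· / 2) (Finset.sum_congr rfl fun u _ => Finset.sum_congr rfl fun v _ => ?_)
  by_cases hP : P u v <;> by_cases hQ : Q u v <;> simp [hP, hQ]

lemma cutWeight_sub_cutWeight (w : V → V → ℝ) (P Q : V → V → Prop) :
    cutWeight w Q - cutWeight w P =
      cutWeight w (fun u v => Q u v ∧ ¬ P u v) - cutWeight w (fun u v => P u v ∧ ¬ Q u v) := by
  rw [← cutWeight_and_add_and_not w P Q, ← cutWeight_and_add_and_not w Q P]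
  simp only [and_comm (a := Q _ _)]
  ring

lemma cutWeight_ne_sub_cutWeight_ne {α : Type*} (w : V → V → ℝ) (f g : V → α) :
    cutWeight w (fun u v => g u ≠ g v) - cutWeight w (fun u v => f u ≠ f v) =
      cutWeight w (fun u v => g u ≠ g v ∧ f u = f v) -
        cutWeight w (fun u v => f u ≠ f v ∧ g u = g v) := by
  simpa only [ne_eq, not_not] using
    cutWeight_sub_cutWeight w (fun u v => f u ≠ f v) (fun u v => g u ≠ g v)

end CutWeight

section ScaleOn

variable {V : Type*} (w : V → V → ℝ) (c : ℝ) (P : V → V → Prop) [∀ u v, Decidable (P u v)]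

def scaleOn (u v : V) : ℝ :=
  if P u v then c * w u v else w u v

lemma scaleOn_symm (hw : ∀ u v, w u v = w v u) (hP : ∀ u v, P u v → P v u) (u v : V) :
    scaleOn w c P u v = scaleOn w c P v u := by
  have hPuv : P u v ↔ P v u := ⟨hP u v, hP v u⟩
  simp only [scaleOn, hPuv, hw u v]

lemma le_scaleOn_and_scaleOn_le (hw : ∀ u v, 0 ≤ w u v) (hc : 1 ≤ c) (u v : V) :
    w u v ≤ scaleOn w c P u v ∧ scaleOn w c P u v ≤ c * w u v := by
  have hle : w u v ≤ c * w u v := le_mul_of_one_le_left (hw u v) hc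
  unfold scaleOn
  split_ifs
  exacts [⟨hle, le_rfl⟩, ⟨le_rfl, hle⟩]

variable [Fintype V] {P} {Q : V → V → Prop}

lemma cutWeight_scaleOn_of_imp (h : ∀ u v, Q u v → P u v) :
    cutWeight (scaleOn w c P) Q = c * cutWeight w Q := by
  rw [← cutWeight_const_mul]
  exact cutWeight_congr_weight fun u v hQ => if_pos (h u v hQ)

lemma cutWeight_scaleOn_of_imp_not (h : ∀ u v, Q u v → ¬ P u v) :
    cutWeight (scaleOn w c P) Q = cutWeight w Q :=
  cutWeight_congr_weight fun u v hQ => if_neg (h u v hQ)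

end ScaleOn

theorem stmt11_general {V : Type*} [Fintype V] {k : ℕ}
    (w : V → V → ℝ) (hsymm : ∀ u v, w u v = w v u) (hnonneg : ∀ u v, 0 ≤ w u v)
    (γ : ℝ) (hγ : 1 ≤ γ)
    (s : Fin k → V)
    (fstar : V → Fin k)
    (N : Set (V → Fin k)) :
    (∀ w' : V → V → ℝ, (∀ u v, w' u v = w' v u) →
        (∀ u v, w u v ≤ w' u v ∧ w' u v ≤ γ * w u v) →
        ∀ g : V → Fin k, IsMultiwayCut s g → g ∉ N →
          cutWeight w' (fun u v => fstar u ≠ fstar v) <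
            cutWeight w' (fun u v => g u ≠ g v)) ↔
    (∀ g : V → Fin k, IsMultiwayCut s g → g ∉ N →
        γ * cutWeight w (fun u v => fstar u ≠ fstar v ∧ g u = g v) <
          cutWeight w (fun u v => g u ≠ g v ∧ fstar u = fstar v)) := by
  classical
  constructor
  · intro hA g hg hgN
    set P : V → V → Prop := fun u v => fstar u ≠ fstar v ∧ g u = g v
    have hP : ∀ u v, P u v → P v u := fun u v h => ⟨h.1.symm, h.2.symm⟩
    have hlt := hA (scaleOn w γ P) (scaleOn_symm w γ P hsymm hP)
      (le_scaleOn_and_scaleOn_le w γ P hnonneg hγ) g hg hgN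
    rw [← sub_pos, cutWeight_ne_sub_cutWeight_ne, cutWeight_scaleOn_of_imp w γ fun _ _ => id,
      cutWeight_scaleOn_of_imp_not w γ fun u v hQ hPuv => hPuv.1 hQ.2] at hlt
    linarith
  · intro hB w' _ hw' g hg hgN
    have hgain := cutWeight_mono (P := fun u v => g u ≠ g v ∧ fstar u = fstar v)
      fun u v _ => (hw' u v).1
    have hloss := cutWeight_mono (P := fun u v => fstar u ≠ fstar v ∧ g u = g v)
      fun u v _ => (hw' u v).2
    rw [cutWeight_const_mul] at hloss
    rw [← sub_pos, cutWeight_ne_sub_cutWeight_ne]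
    linarith [hB g hg hgN]

/-- Equivalence of the two definitions of `(γ, N)`-weak stability for
Minimum Multiway Cut: for a minimum multiway cut `f*` and a collection `N` of multiway
cuts containing `f*`, the following are equivalent:
(A) for every `γ`-perturbation `w'` of `w` and every multiway cut `g ∉ N`,
`w'(E') > w'(E*)`;
(B) for every multiway cut `g ∉ N`, `w(E'∖E*) > γ·w(E*∖E')`. -/
theorem stmt11 {V : Type*} [Fintype V] {k : ℕ}
    (w : V → V → ℝ) (hsymm : ∀ u v, w u v = w v u) (hnonneg : ∀ u v, 0 ≤ w u v)
    (γ : ℝ) (hγ : 1 ≤ γ)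
    (s : Fin k → V) (hs : Function.Injective s)
    (fstar : V → Fin k) (hfstar : IsMultiwayCut s fstar)
    (hmin : ∀ g : V → Fin k, IsMultiwayCut s g →
      cutWeight w (fun u v => fstar u ≠ fstar v) ≤ cutWeight w (fun u v => g u ≠ g v))
    (N : Set (V → Fin k)) (hfN : fstar ∈ N) :
    (∀ w' : V → V → ℝ, (∀ u v, w' u v = w' v u) →
        (∀ u v, w u v ≤ w' u v ∧ w' u v ≤ γ * w u v) →
        ∀ g : V → Fin k, IsMultiwayCut s g → g ∉ N →
          cutWeight w' (fun u v => fstar u ≠ fstar v) <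
            cutWeight w' (fun u v => g u ≠ g v)) ↔
    (∀ g : V → Fin k, IsMultiwayCut s g → g ∉ N →
        γ * cutWeight w (fun u v => fstar u ≠ fstar v ∧ g u = g v) <
          cutWeight w (fun u v => g u ≠ g v ∧ fstar u = fstar v)) :=
  stmt11_general w hsymm hnonneg γ hγ s fstar N
end
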